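/- Let n be a positive integer and let ρ be a complex number with ρ ≠ 1. Then Σ_{j=1}^{n} (−1)^{j+1} · C(n,j) · j · (ρ−1)^{−j} · A_{j−1}(ρ) · ( ρ·Σ_{k=0}^{n−j} C(n−j,k) E_k − E_{n−j} ) = n·E_{n−1}, where E_k are the Euler numbers. -/

import Mathlib

open Finset Nat

/-- The Eulerian numbers `A_{n,j} = Σ_{v=0}^j (−1)^v C(n+1,v) (j−v)^n`. -/
noncomputable def eulerianNumber (n j : ℕ) : ℂ :=
  ∑ v ∈ Finset.range (j + 1), (-1 : ℂ) ^ v * ((n + 1).choose v : ℂ) * ((j : ℂ) - v) ^ n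

/-- The Eulerian polynomials `A_n(ρ) = Σ_{j=0}^n A_{n,j} ρ^j`. -/
noncomputable def eulerianPoly (n : ℕ) (ρ : ℂ) : ℂ :=
  ∑ j ∈ Finset.range (n + 1), eulerianNumber n j * ρ ^ j

/-- The Euler numbers `E_k`, defined by the generating function
`2/(e^t + 1) = Σ_{k≥0} E_k t^k/k!` (as a formal power series). -/
noncomputable def eulerNumber (k : ℕ) : ℂ :=
  (k ! : ℂ) * PowerSeries.coeff (R := ℂ) k ((2 : ℂ) • (PowerSeries.exp ℂ + 1)⁻¹)

/-!
Let `t / (ρ e^t - 1) = ∑ b_j t^j / j!`. For `|ρ| < 1` the left side is `-t ∑_k ρ^k e^{kt}`, and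
`∑_k k^N ρ^k = A_N(ρ) / (1 - ρ)^(N+1)` gives `b_j = (-1)^(j+1) j (ρ-1)^(-j) A_{j-1}(ρ)`. For every
`ρ ≠ 1` this is confirmed through the recurrence `ρ ∑_j C(n,j) b_j - b_n = [n = 1]`, which comes
down to the polynomial identity `X ∑_m C(N,m) (1-X)^(N-m) A_m(X) = A_N(X) - [N = 0](1 - X)`, read
off in `ℂ⟦X⟧` from `(1 - X)^(N+1) ∑_i i^N X^i = A_N(X)`.
Since `ρ ∑_k C(m,k) E_k - E_m` is `m!` times the `m`-th coefficient of `(ρ e^t - 1) E(t)`, where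
`E(t) = ∑ E_k t^k / k!`, the left-hand side is `n!` times the `n`-th coefficient of
`t / (ρ e^t - 1) · (ρ e^t - 1) E(t) = t E(t)`, that is `n E_{n-1}`.
-/

namespace PowerSeries

variable {K : Type*} [Field K] [CharZero K]

theorem coeff_mk_div_factorial_mul_mk_div_factorial (a b : ℕ → K) (n : ℕ) :
    coeff n (mk (fun k ↦ a k / k !) * mk (fun k ↦ b k / k !)) =
      (∑ k ∈ range (n + 1), (n.choose k : K) * a k * b (n - k)) / n ! := by
  rw [coeff_mul, Nat.sum_antidiagonal_eq_sum_range_succ_mk, Finset.sum_div]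
  refine sum_congr rfl fun k hk ↦ ?_
  rw [coeff_mk, coeff_mk, Nat.cast_choose K (mem_range_succ_iff.mp hk)]
  field_simp
  rw [mul_div_mul_right _ _ (Nat.cast_ne_zero.mpr n.factorial_ne_zero)]

theorem exp_eq_mk_one_div_factorial : exp K = mk fun k ↦ (1 : K) / k ! := by
  ext k
  simp [coeff_exp]

theorem mk_div_factorial_mul_C_mul_exp_sub_one (a : ℕ → K) (ρ : K) :
    mk (fun k ↦ a k / k !) * (C ρ * exp K - 1) =
      mk fun n ↦ (ρ * ∑ k ∈ range (n + 1), (n.choose k : K) * a k - a n) / n ! := by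
  ext n
  rw [mul_sub, mul_one, mul_left_comm, map_sub, coeff_C_mul, exp_eq_mk_one_div_factorial,
    coeff_mk_div_factorial_mul_mk_div_factorial, coeff_mk, coeff_mk]
  simp only [mul_one]
  ring

theorem coeff_one_sub_X_pow {R : Type*} [CommRing R] (M v : ℕ) :
    coeff v ((1 - X : R⟦X⟧) ^ M) = (-1) ^ v * M.choose v := by
  rw [show (1 - X : R⟦X⟧) = rescale (-1) (1 + X) by simp [sub_eq_add_neg], ← map_pow,
    coeff_rescale, ← Polynomial.coe_X, ← Polynomial.coe_one, ← Polynomial.coe_add,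
    ← Polynomial.coe_pow, Polynomial.coeff_coe, Polynomial.coeff_one_add_X_pow]

end PowerSeries

/-- For `j > N`, `A_{N,j}` is up to sign the `(N+1)`-st forward difference of the degree-`N`
polynomial `x ↦ (j - x)^N`. -/
theorem eulerianNumber_eq_zero_of_lt {N j : ℕ} (h : N < j) : eulerianNumber N j = 0 := by
  have hdeg : ((Polynomial.C (j : ℂ) - Polynomial.X) ^ N).natDegree < N + 1 :=
    Nat.lt_succ_of_le (by compute_degree)
  have hΔ := congrFun (Polynomial.fwdDiff_iter_eq_zero_of_degree_lt hdeg) 0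
  simp only [fwdDiff_iter_eq_sum_shift, zero_add, nsmul_eq_mul, mul_one, Polynomial.eval_pow,
    Polynomial.eval_sub, Polynomial.eval_C, Polynomial.eval_X, zsmul_eq_mul, Int.cast_mul,
    Int.cast_pow, Int.cast_neg, Int.cast_one, Int.cast_natCast, Pi.zero_apply] at hΔ
  have hsign : ∀ v ∈ range (N + 2), (-1 : ℂ) ^ v = (-1) ^ (N + 1) * (-1) ^ (N + 1 - v) := by
    intro v hv
    obtain ⟨d, hd⟩ := Nat.exists_eq_add_of_le (mem_range_succ_iff.mp hv)
    rw [hd, Nat.add_sub_cancel_left, pow_add, mul_assoc, ← mul_pow, neg_one_mul, neg_neg, one_pow,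
      mul_one]
  rw [eulerianNumber, ← sum_subset (range_subset_range.mpr (by omega : N + 2 ≤ j + 1))
    fun v _ hv ↦ by rw [Nat.choose_eq_zero_of_lt (by simp at hv; omega)]; simp]
  rw [sum_congr rfl fun v hv ↦ by rw [hsign v hv, mul_assoc, mul_assoc], ← mul_sum]
  simp only [← mul_assoc]
  exact mul_eq_zero_of_right _ hΔ

open Polynomial in
noncomputable def eulerianPolynomial (N : ℕ) : ℂ[X] :=
  ∑ j ∈ range (N + 1), C (eulerianNumber N j) * X ^ j

theorem eval_eulerianPolynomial (N : ℕ) (ρ : ℂ) :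
    (eulerianPolynomial N).eval ρ = eulerianPoly N ρ := by
  simp [eulerianPolynomial, eulerianPoly, Polynomial.eval_finsetSum]

theorem coeff_eulerianPolynomial (N j : ℕ) :
    (eulerianPolynomial N).coeff j = eulerianNumber N j := by
  simp only [eulerianPolynomial, Polynomial.finsetSum_coeff, Polynomial.coeff_C_mul_X_pow,
    sum_ite_eq, mem_range]
  split_ifs with h
  · rfl
  · exact (eulerianNumber_eq_zero_of_lt (by omega)).symm

open PowerSeries

noncomputable def natPowSeries (N : ℕ) : ℂ⟦X⟧ :=
  PowerSeries.mk fun i ↦ (i : ℂ) ^ N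

theorem one_sub_X_pow_mul_natPowSeries (N : ℕ) :
    (1 - X) ^ (N + 1) * natPowSeries N = (eulerianPolynomial N : ℂ⟦X⟧) := by
  ext j
  rw [Polynomial.coeff_coe, coeff_eulerianPolynomial, coeff_mul,
    Nat.sum_antidiagonal_eq_sum_range_succ_mk, eulerianNumber]
  refine sum_congr rfl fun v hv ↦ ?_
  rw [coeff_one_sub_X_pow, natPowSeries, coeff_mk, Nat.cast_sub (mem_range_succ_iff.mp hv)]

theorem X_mul_sum_choose_smul_natPowSeries (N : ℕ) :
    X * ∑ m ∈ range (N + 1), (N.choose m : ℂ) • natPowSeries m =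
      natPowSeries N - if N = 0 then 1 else 0 := by
  have hshift : ∑ m ∈ range (N + 1), (N.choose m : ℂ) • natPowSeries m =
      PowerSeries.mk fun i ↦ coeff (i + 1) (natPowSeries N) := by
    ext i
    simp [natPowSeries, map_sum, add_pow, mul_comm]
  rw [hshift, ← sub_const_eq_X_mul_shift]
  congr 1
  by_cases hN : N = 0 <;> simp [natPowSeries, hN]

theorem X_mul_sum_choose_mul_eulerianPolynomial (N : ℕ) :
    (Polynomial.X : Polynomial ℂ) * ∑ m ∈ range (N + 1),
        Polynomial.C (N.choose m : ℂ) * (1 - Polynomial.X) ^ (N - m) * eulerianPolynomial m =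
      eulerianPolynomial N - if N = 0 then 1 - Polynomial.X else 0 := by
  apply Polynomial.coe_inj.mp
  have hterm : ∀ m ∈ range (N + 1),
      (N.choose m : ℂ⟦X⟧) * (1 - X) ^ (N - m) * (eulerianPolynomial m : ℂ⟦X⟧) =
        (1 - X) ^ (N + 1) * ((N.choose m : ℂ) • natPowSeries m) := by
    intro m hm
    rw [← one_sub_X_pow_mul_natPowSeries, smul_eq_C_mul, map_natCast,
      ← pow_sub_mul_pow _ (by simpa [Nat.lt_succ_iff] using hm : m + 1 ≤ N + 1),
      Nat.add_sub_add_right]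
    ring
  simp only [← Polynomial.coeToPowerSeries.ringHom_apply, map_mul, map_sum, map_sub, map_pow,
    map_one, apply_ite, map_zero, map_natCast]
  simp only [Polynomial.coeToPowerSeries.ringHom_apply, Polynomial.coe_X]
  rw [sum_congr rfl hterm, ← mul_sum, mul_left_comm, X_mul_sum_choose_smul_natPowSeries,
    ← one_sub_X_pow_mul_natPowSeries]
  rcases eq_or_ne N 0 with rfl | hN <;> simp [*, mul_sub]

theorem mul_sum_choose_mul_one_sub_pow_mul_eulerianPoly (N : ℕ) (ρ : ℂ) :
    ρ * ∑ m ∈ range (N + 1), (N.choose m : ℂ) * (1 - ρ) ^ (N - m) * eulerianPoly m ρ =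
      eulerianPoly N ρ - if N = 0 then 1 - ρ else 0 := by
  simpa [Polynomial.eval_finsetSum, eval_eulerianPolynomial, apply_ite (Polynomial.eval ρ)] using
    congrArg (Polynomial.eval ρ) (X_mul_sum_choose_mul_eulerianPolynomial N)

/-- The Apostol–Bernoulli numbers `t / (ρ e^t - 1) = ∑ B_j(ρ) t^j / j!`, in closed form. The
closed form is only valid for `ρ ≠ 1`; at `ρ = 1` it is junk (`0⁻¹ = 0`). -/
noncomputable def apostolBernoulli (ρ : ℂ) (j : ℕ) : ℂ :=
  (-1) ^ (j + 1) * j * (ρ - 1) ^ (-(j : ℤ)) * eulerianPoly (j - 1) ρ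

theorem apostolBernoulli_zero (ρ : ℂ) : apostolBernoulli ρ 0 = 0 := by
  simp [apostolBernoulli]

theorem apostolBernoulli_succ (ρ : ℂ) (m : ℕ) :
    apostolBernoulli ρ (m + 1) = -((m + 1) * eulerianPoly m ρ / (1 - ρ) ^ (m + 1)) := by
  have hsign : (-1 : ℂ) ^ (m + 1 + 1) * ((-1) ^ (m + 1))⁻¹ = -1 := by
    rw [pow_succ, mul_right_comm, mul_inv_cancel₀ (by simp), one_mul]
  rw [apostolBernoulli, Nat.add_sub_cancel, zpow_neg, zpow_natCast, ← neg_sub 1 ρ,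
    neg_pow (1 - ρ), mul_inv]
  push_cast
  linear_combination ((m + 1) * eulerianPoly m ρ / (1 - ρ) ^ (m + 1)) * hsign

theorem apostolBernoulli_recurrence {ρ : ℂ} (hρ : ρ ≠ 1) (n : ℕ) :
    ρ * ∑ j ∈ range (n + 1), (n.choose j : ℂ) * apostolBernoulli ρ j - apostolBernoulli ρ n =
      if n = 1 then 1 else 0 := by
  rcases n with _ | N
  · simp [apostolBernoulli_zero]
  have hσ : 1 - ρ ≠ 0 := sub_ne_zero.mpr hρ.symm
  have hsum : ∑ j ∈ range (N + 2), ((N + 1).choose j : ℂ) * apostolBernoulli ρ j =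
      -((N + 1) / (1 - ρ) ^ (N + 1) *
        ∑ m ∈ range (N + 1), (N.choose m : ℂ) * (1 - ρ) ^ (N - m) * eulerianPoly m ρ) := by
    rw [sum_range_succ', apostolBernoulli_zero, mul_zero, add_zero, mul_sum, ← sum_neg_distrib]
    refine sum_congr rfl fun m hm ↦ ?_
    have hchoose : ((N + 1).choose (m + 1) : ℂ) * (m + 1) = (N + 1) * N.choose m := by
      exact_mod_cast (Nat.add_one_mul_choose_eq N m).symm
    rw [apostolBernoulli_succ,
      ← pow_sub_mul_pow (1 - ρ) (by simpa [Nat.lt_succ_iff] using hm : m + 1 ≤ N + 1),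
      Nat.add_sub_add_right]
    field_simp
    linear_combination -eulerianPoly m ρ * hchoose
  rw [hsum, mul_neg, mul_left_comm, mul_sum_choose_mul_one_sub_pow_mul_eulerianPoly,
    apostolBernoulli_succ]
  rcases eq_or_ne N 0 with rfl | hN
  · simp only [zero_add, pow_one, ↓reduceIte, sub_neg_eq_add]
    field_simp
    ring
  · simp only [hN, ↓reduceIte, sub_zero, sub_neg_eq_add, Nat.add_eq_right]
    ring

theorem mk_apostolBernoulli_mul_C_mul_exp_sub_one {ρ : ℂ} (hρ : ρ ≠ 1) :
    PowerSeries.mk (fun j ↦ apostolBernoulli ρ j / j !) * (C ρ * exp ℂ - 1) = X := by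
  rw [mk_div_factorial_mul_C_mul_exp_sub_one]
  ext n
  simp_rw [coeff_mk, apostolBernoulli_recurrence hρ, coeff_X]
  split_ifs with h <;> simp [h]

theorem sum_choose_mul_apostolBernoulli_mul {ρ : ℂ} (hρ : ρ ≠ 1) (e : ℕ → ℂ) (n : ℕ) :
    ∑ j ∈ range (n + 1), (n.choose j : ℂ) * apostolBernoulli ρ j *
        (ρ * ∑ k ∈ range (n - j + 1), ((n - j).choose k : ℂ) * e k - e (n - j)) =
      n * e (n - 1) := by
  set B := PowerSeries.mk fun j ↦ apostolBernoulli ρ j / (j ! : ℂ)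
  set E := PowerSeries.mk fun k ↦ e k / (k ! : ℂ)
  have hBE : B * (E * (C ρ * exp ℂ - 1)) = X * E := by
    rw [← mk_apostolBernoulli_mul_C_mul_exp_sub_one hρ]
    ring
  have h := congrArg (coeff n) hBE
  rw [mk_div_factorial_mul_C_mul_exp_sub_one, coeff_mk_div_factorial_mul_mk_div_factorial] at h
  rcases n with _ | m
  · simp [apostolBernoulli_zero]
  · rw [coeff_succ_X_mul, coeff_mk, Nat.factorial_succ, Nat.cast_mul, ← div_div,
      div_left_inj' (Nat.cast_ne_zero.mpr m.factorial_ne_zero),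
      div_eq_iff (Nat.cast_ne_zero.mpr m.succ_ne_zero)] at h
    rw [h, Nat.add_sub_cancel, mul_comm]

theorem stmt11_general (n : ℕ) (ρ : ℂ) (hρ : ρ ≠ 1) :
    ∑ j ∈ Finset.Icc 1 n,
        (-1 : ℂ) ^ (j + 1) * (n.choose j : ℂ) * (j : ℂ) * (ρ - 1) ^ (-(j : ℤ)) *
          eulerianPoly (j - 1) ρ *
          (ρ * (∑ k ∈ Finset.range (n - j + 1), ((n - j).choose k : ℂ) * eulerNumber k) -
            eulerNumber (n - j)) =
      (n : ℂ) * eulerNumber (n - 1) := by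
  rw [← sum_choose_mul_apostolBernoulli_mul hρ eulerNumber n]
  refine (sum_congr rfl fun j _ ↦ by rw [apostolBernoulli]; ring).trans (sum_subset ?_ ?_)
  · intro j hj
    simp only [mem_Icc, mem_range] at hj ⊢
    omega
  · intro j hj hj'
    obtain rfl : j = 0 := by simp only [mem_Icc, mem_range] at hj hj'; omega
    simp [apostolBernoulli_zero]

theorem stmt11 (n : ℕ) (hn : 0 < n) (ρ : ℂ) (hρ : ρ ≠ 1) :
    ∑ j ∈ Finset.Icc 1 n,
        (-1 : ℂ) ^ (j + 1) * (n.choose j : ℂ) * (j : ℂ) * (ρ - 1) ^ (-(j : ℤ)) *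
          eulerianPoly (j - 1) ρ *
          (ρ * (∑ k ∈ Finset.range (n - j + 1), ((n - j).choose k : ℂ) * eulerNumber k) -
            eulerNumber (n - j)) =
      (n : ℂ) * eulerNumber (n - 1) :=
  stmt11_general n ρ hρ
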